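/- arXiv:1711.05524 — 3 statements merged into one kernel-verified Lean document; each statement's English description precedes it below -/
import Mathlib

section
/- Let X₁ ~ Poisson(n₁p₁) and X₂ ~ Poisson(n₂p₂) be independent, and define f(x₁,x₂) = (x₁/n₁ - x₂/n₂)² - x₁/n₁² - x₂/n₂² - 2(p₁-p₂)(x₁/n₁ - x₂/n₂) + (p₁-p₂)². Then Cov(f(X₁,X₂), X₁) = 0 and Cov(f(X₁,X₂), X₂) = 0. -/
/-
Under independence every moment `E[X₁ ^ a * X₂ ^ b]` factors, and the factorial moments
`E[X (X - 1) ⋯ (X - k + 1)] = r ^ k` of a Poisson variable give `E X = r`, `E X² = r² + r` and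
`E X³ = r³ + 3r² + r`. Expanding `f` and `f * X₁` into monomials of degree at most 3 and
integrating termwise yields `E f = 0` and `E[f X₁] = 0`, hence `Cov(f, X₁) = 0`. Since `f` is
invariant under exchanging the indices 1 and 2, the second covariance is the first one with the
roles of the two variables swapped.
-/

open MeasureTheory ProbabilityTheory

/-- `X` has the Poisson distribution with mean `l` under `μ`. -/
def IsPoisson {Ω : Type*} [MeasurableSpace Ω] (μ : Measure Ω) (X : Ω → ℕ) (l : ℝ) : Prop :=
  ∀ m : ℕ, (μ (X ⁻¹' {m})).toReal = Real.exp (-l) * l ^ m / m.factorial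

/-- Covariance of two real random variables. -/
noncomputable def cov {Ω : Type*} [MeasurableSpace Ω] (μ : Measure Ω) (f g : Ω → ℝ) : ℝ :=
  (∫ ω, f ω * g ω ∂μ) - (∫ ω, f ω ∂μ) * (∫ ω, g ω ∂μ)

open scoped NNReal

section HasIntegral

variable {α : Type*} [MeasurableSpace α] {μ : Measure α} {f g : α → ℝ} {a b : ℝ}

def HasIntegral (μ : Measure α) (f : α → ℝ) (a : ℝ) : Prop :=
  Integrable f μ ∧ ∫ x, f x ∂μ = a

lemma HasIntegral.add (hf : HasIntegral μ f a) (hg : HasIntegral μ g b) :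
    HasIntegral μ (fun x => f x + g x) (a + b) :=
  ⟨hf.1.add hg.1, by rw [integral_add hf.1 hg.1, hf.2, hg.2]⟩

lemma HasIntegral.const_mul (c : ℝ) (hf : HasIntegral μ f a) :
    HasIntegral μ (fun x => c * f x) (c * a) :=
  ⟨hf.1.const_mul c, by rw [integral_const_mul, hf.2]⟩

lemma HasIntegral.congr (hf : HasIntegral μ f a) (hfg : ∀ x, f x = g x) (hab : a = b) :
    HasIntegral μ g b := by
  obtain rfl : f = g := funext hfg
  exact hab ▸ hf

lemma hasIntegral_const [IsProbabilityMeasure μ] (c : ℝ) : HasIntegral μ (fun _ => c) c :=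
  ⟨integrable_const c, by simp⟩

lemma ProbabilityTheory.IndepFun.hasIntegral_mul (hfg : IndepFun f g μ) (hf : HasIntegral μ f a)
    (hg : HasIntegral μ g b) : HasIntegral μ (fun x => f x * g x) (a * b) :=
  ⟨hfg.integrable_mul hf.1 hg.1, by
    rw [hfg.integral_fun_mul_eq_mul_integral hf.1.aestronglyMeasurable hg.1.aestronglyMeasurable,
      hf.2, hg.2]⟩

lemma ProbabilityTheory.HasLaw.hasIntegral_comp {β : Type*} [MeasurableSpace β] {ν : Measure β}
    {X : α → β} {g : β → ℝ} (hX : HasLaw X ν μ) (hg : HasIntegral ν g a) :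
    HasIntegral μ (fun x => g (X x)) a := by
  rw [← hX.map_eq] at hg
  exact ⟨hg.1.comp_aemeasurable hX.aemeasurable,
    (integral_map hX.aemeasurable hg.1.aestronglyMeasurable).symm.trans hg.2⟩

end HasIntegral

section PoissonMoments

lemma hasSum_poisson_mul_descFactorial (r : ℝ≥0) (k : ℕ) :
    HasSum (fun n => Real.exp (-r) * r ^ n / n.factorial * n.descFactorial k) ((r : ℝ) ^ k) := by
  have hlow : ∑ n ∈ Finset.range k,
      Real.exp (-r) * r ^ n / n.factorial * (n.descFactorial k : ℝ) = 0 :=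
    Finset.sum_eq_zero fun n hn => by
      simp [Nat.descFactorial_eq_zero_iff_lt.mpr (Finset.mem_range.mp hn)]
  have hshift : (fun n => Real.exp (-r) * r ^ (n + k) / (n + k).factorial *
      ((n + k).descFactorial k : ℝ)) =
      fun n => (r : ℝ) ^ k * (Real.exp (-r) * r ^ n / n.factorial) := by
    funext n
    have hfac : ((n + k).factorial : ℝ) = n.factorial * (n + k).descFactorial k := by
      rw [Nat.add_descFactorial_eq_ascFactorial, ← Nat.factorial_mul_ascFactorial]; push_cast; ring
    rw [hfac, pow_add]
    field_simp
  rw [← hasSum_nat_add_iff' k, hlow, sub_zero, hshift]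
  simpa using (hasSum_one_poissonMeasure r).mul_left ((r : ℝ) ^ k)

lemma hasIntegral_descFactorial_poissonMeasure (r : ℝ≥0) (k : ℕ) :
    HasIntegral (poissonMeasure r) (fun n => (n.descFactorial k : ℝ)) (r ^ k) := by
  have hsum := hasSum_poisson_mul_descFactorial r k
  have hint : Integrable (fun n => (n.descFactorial k : ℝ)) (poissonMeasure r) :=
    integrable_poissonMeasure_iff.mpr (by simpa using hsum.summable)
  exact ⟨hint, (hasSum_integral_poissonMeasure hint).unique (by simpa using hsum)⟩

lemma Nat.cast_descFactorial_three (n : ℕ) : (n.descFactorial 3 : ℝ) = n * (n - 1) * (n - 2) := by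
  rw [Nat.descFactorial_succ, Nat.cast_mul, Nat.cast_descFactorial_two]
  rcases Nat.lt_or_ge n 2 with h | h
  · interval_cases n <;> simp
  · push_cast [h]; ring

variable (r : ℝ≥0)

lemma hasIntegral_cast_poissonMeasure :
    HasIntegral (poissonMeasure r) (fun n => (n : ℝ)) r :=
  (hasIntegral_descFactorial_poissonMeasure r 1).congr (by simp) (pow_one _)

lemma hasIntegral_cast_sq_poissonMeasure :
    HasIntegral (poissonMeasure r) (fun n => (n : ℝ) ^ 2) (r ^ 2 + r) :=
  ((hasIntegral_descFactorial_poissonMeasure r 2).add (hasIntegral_cast_poissonMeasure r)).congr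
    (fun n => by rw [Nat.cast_descFactorial_two]; ring) rfl

lemma hasIntegral_cast_pow_three_poissonMeasure :
    HasIntegral (poissonMeasure r) (fun n => (n : ℝ) ^ 3) (r ^ 3 + 3 * r ^ 2 + r) :=
  (((hasIntegral_descFactorial_poissonMeasure r 3).add
    ((hasIntegral_descFactorial_poissonMeasure r 2).const_mul 3)).add
      (hasIntegral_cast_poissonMeasure r)).congr
    (fun n => by rw [Nat.cast_descFactorial_three, Nat.cast_descFactorial_two]; ring) rfl

end PoissonMoments

section IsPoisson

variable {Ω : Type*} [MeasurableSpace Ω] {μ : Measure Ω} {X : Ω → ℕ} {l : ℝ}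

lemma IsPoisson.nonneg (hX : IsPoisson μ X l) : 0 ≤ l := by
  have h := hX 1
  simp only [pow_one, Nat.factorial_one, Nat.cast_one, div_one] at h
  exact (mul_nonneg_iff_of_pos_left (Real.exp_pos _)).mp (h ▸ ENNReal.toReal_nonneg)

lemma IsPoisson.hasLaw [IsFiniteMeasure μ] (hX : IsPoisson μ X l) (hXm : Measurable X) :
    HasLaw X (poissonMeasure (⟨l, hX.nonneg⟩ : ℝ≥0)) μ where
  aemeasurable := hXm.aemeasurable
  map_eq := by
    refine Measure.ext_iff_singleton.mpr fun m => ?_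
    rw [Measure.map_apply hXm (measurableSet_singleton m),
      ← ENNReal.ofReal_toReal (measure_ne_top μ _), hX m]
    exact (poissonMeasure_singleton ⟨l, hX.nonneg⟩ m).symm

end IsPoisson

noncomputable def sqDiffStat (n₁ n₂ p₁ p₂ x₁ x₂ : ℝ) : ℝ :=
  (x₁ / n₁ - x₂ / n₂) ^ 2 - x₁ / n₁ ^ 2 - x₂ / n₂ ^ 2
    - 2 * (p₁ - p₂) * (x₁ / n₁ - x₂ / n₂) + (p₁ - p₂) ^ 2

lemma sqDiffStat_swap (n₁ n₂ p₁ p₂ x₁ x₂ : ℝ) :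
    sqDiffStat n₂ n₁ p₂ p₁ x₂ x₁ = sqDiffStat n₁ n₂ p₁ p₂ x₁ x₂ := by
  unfold sqDiffStat; ring

theorem cov_sqDiffStat_left {Ω : Type*} [MeasurableSpace Ω] {μ : Measure Ω}
    [IsProbabilityMeasure μ] {X₁ X₂ : Ω → ℕ} (hX₁m : Measurable X₁) (hX₂m : Measurable X₂)
    {n₁ n₂ p₁ p₂ : ℝ} (hn₁ : n₁ ≠ 0) (hn₂ : n₂ ≠ 0)
    (hX₁ : IsPoisson μ X₁ (n₁ * p₁)) (hX₂ : IsPoisson μ X₂ (n₂ * p₂)) (hind : IndepFun X₁ X₂ μ) :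
    cov μ (fun ω => sqDiffStat n₁ n₂ p₁ p₂ (X₁ ω) (X₂ ω)) (fun ω => (X₁ ω : ℝ)) = 0 := by
  have L₁ := hX₁.hasLaw hX₁m
  have L₂ := hX₂.hasLaw hX₂m
  have a₁ : HasIntegral μ (fun ω => (X₁ ω : ℝ)) (n₁ * p₁) :=
    L₁.hasIntegral_comp (hasIntegral_cast_poissonMeasure _)
  have a₂ : HasIntegral μ (fun ω => (X₁ ω : ℝ) ^ 2) ((n₁ * p₁) ^ 2 + n₁ * p₁) :=
    L₁.hasIntegral_comp (hasIntegral_cast_sq_poissonMeasure _)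
  have a₃ : HasIntegral μ (fun ω => (X₁ ω : ℝ) ^ 3)
      ((n₁ * p₁) ^ 3 + 3 * (n₁ * p₁) ^ 2 + n₁ * p₁) :=
    L₁.hasIntegral_comp (hasIntegral_cast_pow_three_poissonMeasure _)
  have b₁ : HasIntegral μ (fun ω => (X₂ ω : ℝ)) (n₂ * p₂) :=
    L₂.hasIntegral_comp (hasIntegral_cast_poissonMeasure _)
  have b₂ : HasIntegral μ (fun ω => (X₂ ω : ℝ) ^ 2) ((n₂ * p₂) ^ 2 + n₂ * p₂) :=
    L₂.hasIntegral_comp (hasIntegral_cast_sq_poissonMeasure _)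
  have hind' (f g : ℕ → ℝ) : IndepFun (fun ω => f (X₁ ω)) (fun ω => g (X₂ ω)) μ :=
    hind.comp .of_discrete .of_discrete
  have a₁b₁ := (hind' (↑) (↑)).hasIntegral_mul a₁ b₁
  have a₂b₁ := (hind' (↑· ^ 2) (↑)).hasIntegral_mul a₂ b₁
  have a₁b₂ := (hind' (↑) (↑· ^ 2)).hasIntegral_mul a₁ b₂
  set d := p₁ - p₂
  have hF : HasIntegral μ (fun ω => sqDiffStat n₁ n₂ p₁ p₂ (X₁ ω) (X₂ ω)) 0 :=
    (((((a₂.const_mul (1 / n₁ ^ 2)).add (a₁b₁.const_mul (-2 / (n₁ * n₂)))).add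
      (b₂.const_mul (1 / n₂ ^ 2))).add (a₁.const_mul (-1 / n₁ ^ 2 - 2 * d / n₁))).add
      (b₁.const_mul (-1 / n₂ ^ 2 + 2 * d / n₂))).add (hasIntegral_const (d ^ 2))
    |>.congr (fun ω => by unfold sqDiffStat; ring) (by field_simp; ring)
  have hFX : HasIntegral μ (fun ω => sqDiffStat n₁ n₂ p₁ p₂ (X₁ ω) (X₂ ω) * X₁ ω) 0 :=
    (((((a₃.const_mul (1 / n₁ ^ 2)).add (a₂b₁.const_mul (-2 / (n₁ * n₂)))).add
      (a₁b₂.const_mul (1 / n₂ ^ 2))).add (a₂.const_mul (-1 / n₁ ^ 2 - 2 * d / n₁))).add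
      (a₁b₁.const_mul (-1 / n₂ ^ 2 + 2 * d / n₂))).add (a₁.const_mul (d ^ 2))
    |>.congr (fun ω => by unfold sqDiffStat; ring) (by field_simp; ring)
  rw [cov, hFX.2, hF.2, zero_mul, sub_zero]

theorem stmt_9_general {Ω : Type*} [MeasurableSpace Ω] (μ : Measure Ω) [IsProbabilityMeasure μ]
    (X₁ X₂ : Ω → ℕ) (hX₁m : Measurable X₁) (hX₂m : Measurable X₂)
    (n₁ n₂ p₁ p₂ : ℝ) (hn₁ : 0 < n₁) (hn₂ : 0 < n₂)
    (hX₁ : IsPoisson μ X₁ (n₁ * p₁)) (hX₂ : IsPoisson μ X₂ (n₂ * p₂))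
    (hind : IndepFun X₁ X₂ μ) :
    cov μ (fun ω => ((X₁ ω : ℝ) / n₁ - (X₂ ω : ℝ) / n₂) ^ 2
        - (X₁ ω : ℝ) / n₁ ^ 2 - (X₂ ω : ℝ) / n₂ ^ 2
        - 2 * (p₁ - p₂) * ((X₁ ω : ℝ) / n₁ - (X₂ ω : ℝ) / n₂) + (p₁ - p₂) ^ 2)
      (fun ω => (X₁ ω : ℝ)) = 0 ∧
    cov μ (fun ω => ((X₁ ω : ℝ) / n₁ - (X₂ ω : ℝ) / n₂) ^ 2
        - (X₁ ω : ℝ) / n₁ ^ 2 - (X₂ ω : ℝ) / n₂ ^ 2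
        - 2 * (p₁ - p₂) * ((X₁ ω : ℝ) / n₁ - (X₂ ω : ℝ) / n₂) + (p₁ - p₂) ^ 2)
      (fun ω => (X₂ ω : ℝ)) = 0 := by
  refine ⟨cov_sqDiffStat_left hX₁m hX₂m hn₁.ne' hn₂.ne' hX₁ hX₂ hind, ?_⟩
  have h := cov_sqDiffStat_left hX₂m hX₁m hn₂.ne' hn₁.ne' hX₂ hX₁ hind.symm
  simp only [sqDiffStat_swap] at h
  exact h

theorem stmt_9 {Ω : Type*} [MeasurableSpace Ω] (μ : Measure Ω) [IsProbabilityMeasure μ]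
    (X₁ X₂ : Ω → ℕ) (hX₁m : Measurable X₁) (hX₂m : Measurable X₂)
    (n₁ n₂ p₁ p₂ : ℝ) (hn₁ : 0 < n₁) (hn₂ : 0 < n₂)
    (hp₁ : p₁ ∈ Set.Icc (0 : ℝ) 1) (hp₂ : p₂ ∈ Set.Icc (0 : ℝ) 1)
    (hX₁ : IsPoisson μ X₁ (n₁ * p₁)) (hX₂ : IsPoisson μ X₂ (n₂ * p₂))
    (hind : IndepFun X₁ X₂ μ) :
    cov μ (fun ω => ((X₁ ω : ℝ) / n₁ - (X₂ ω : ℝ) / n₂) ^ 2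
        - (X₁ ω : ℝ) / n₁ ^ 2 - (X₂ ω : ℝ) / n₂ ^ 2
        - 2 * (p₁ - p₂) * ((X₁ ω : ℝ) / n₁ - (X₂ ω : ℝ) / n₂) + (p₁ - p₂) ^ 2)
      (fun ω => (X₁ ω : ℝ)) = 0 ∧
    cov μ (fun ω => ((X₁ ω : ℝ) / n₁ - (X₂ ω : ℝ) / n₂) ^ 2
        - (X₁ ω : ℝ) / n₁ ^ 2 - (X₂ ω : ℝ) / n₂ ^ 2
        - 2 * (p₁ - p₂) * ((X₁ ω : ℝ) / n₁ - (X₂ ω : ℝ) / n₂) + (p₁ - p₂) ^ 2)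
      (fun ω => (X₂ ω : ℝ)) = 0 :=
  stmt_9_general μ X₁ X₂ hX₁m hX₂m n₁ n₂ p₁ p₂ hn₁ hn₂ hX₁ hX₂ hind
end

section
/- Let X₁ ~ Poisson(n₁p₁) and X₂ ~ Poisson(n₂p₂) be independent, and define f(x₁,x₂) = (x₁/n₁ - x₂/n₂)² - x₁/n₁² - x₂/n₂² - 2(p₁-p₂)(x₁/n₁ - x₂/n₂) + (p₁-p₂)². Then Var(f(X₁,X₂)) = 2(p₁/n₁ + p₂/n₂)². -/
open MeasureTheory ProbabilityTheory

/-!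
Write `λᵢ = nᵢ pᵢ`, `Yᵢ = (Xᵢ - λᵢ) / nᵢ` and `Aᵢ = ((Xᵢ - λᵢ)² - Xᵢ) / nᵢ²`; completing the square,
the statistic is `A₁ + A₂ - 2 Y₁ Y₂`. The three summands are uncorrelated: `A₁` and `A₂` are
independent, and `Cov(Aᵢ, Y₁ Y₂) = Cov(Aᵢ, Yᵢ) E[Yⱼ] = 0` because `Yⱼ` is centred. Hence the
variance is `Var A₁ + Var A₂ + 4 Var Y₁ Var Y₂`. The Poisson moments needed,
`Var (X - λ) = λ` and `Var ((X - λ)² - X) = 2λ²`, follow by writing each polynomial in the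
falling-factorial basis, since `E[X (X - 1) ⋯ (X - k + 1)] = λᵏ`. Altogether the variance is
`2λ₁²/n₁⁴ + 2λ₂²/n₂⁴ + 4λ₁λ₂/(n₁²n₂²) = 2 (p₁/n₁ + p₂/n₂)²`.
-/

open Real
open scoped NNReal ENNReal

section PoissonMoments

variable (r : ℝ≥0)

lemma hasSum_poissonMeasure_mul_descFactorial (k : ℕ) :
    HasSum (fun n : ℕ ↦ exp (-r) * r ^ n / n.factorial * (n.descFactorial k : ℝ)) (r ^ k) := by
  set f : ℕ → ℝ := fun n ↦ exp (-r) * r ^ n / n.factorial * (n.descFactorial k : ℝ)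
  have hshift : HasSum (fun n ↦ f (n + k)) (r ^ k) := by
    have hterm (n : ℕ) : f (n + k) = r ^ k * (exp (-r) * r ^ n / n.factorial) := by
      have hfac : ((n + k).factorial : ℝ) = n.factorial * (n + k).descFactorial k := by
        have h := Nat.factorial_mul_descFactorial (Nat.le_add_left k n)
        rw [Nat.add_sub_cancel_right] at h
        exact_mod_cast h.symm
      simp only [f, hfac, pow_add]
      field_simp
    simpa only [hterm, mul_one] using (hasSum_one_poissonMeasure r).mul_left ((r : ℝ) ^ k)
  have hlow : ∑ n ∈ Finset.range k, f n = 0 :=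
    Finset.sum_eq_zero fun n hn ↦ by
      simp [f, Nat.descFactorial_eq_zero_iff_lt.2 (Finset.mem_range.1 hn)]
  simpa [hlow] using (hasSum_nat_add_iff k).1 hshift

lemma hasSum_poissonMeasure_mul_sub :
    HasSum (fun n : ℕ ↦ exp (-r) * r ^ n / n.factorial * ((n : ℝ) - r)) 0 := by
  have h := hasSum_poissonMeasure_mul_descFactorial r
  convert ((h 1).add ((h 0).mul_left (-r : ℝ))).congr_fun fun n ↦ ?_ using 1
  · ring
  · simp only [← descPochhammer_eval_eq_descFactorial ℝ]
    simp [descPochhammer_succ_right]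
    ring

lemma hasSum_poissonMeasure_mul_sub_sq :
    HasSum (fun n : ℕ ↦ exp (-r) * r ^ n / n.factorial * ((n : ℝ) - r) ^ 2) r := by
  have h := hasSum_poissonMeasure_mul_descFactorial r
  convert (((h 2).add ((h 1).mul_left (1 - 2 * r : ℝ))).add
    ((h 0).mul_left ((r : ℝ) ^ 2))).congr_fun fun n ↦ ?_ using 1
  · ring
  · simp only [← descPochhammer_eval_eq_descFactorial ℝ]
    simp [descPochhammer_succ_right]
    ring

-- `(n - r) ^ 2 - n` is the second Poisson–Charlier polynomial, orthogonal to `1` and `n - r`.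
lemma hasSum_poissonMeasure_mul_charlier :
    HasSum (fun n : ℕ ↦ exp (-r) * r ^ n / n.factorial * (((n : ℝ) - r) ^ 2 - n)) 0 := by
  have h := hasSum_poissonMeasure_mul_descFactorial r
  convert (((h 2).add ((h 1).mul_left (-2 * r : ℝ))).add
    ((h 0).mul_left ((r : ℝ) ^ 2))).congr_fun fun n ↦ ?_ using 1
  · ring
  · simp only [← descPochhammer_eval_eq_descFactorial ℝ]
    simp [descPochhammer_succ_right]
    ring

lemma hasSum_poissonMeasure_mul_charlier_sq :
    HasSum (fun n : ℕ ↦ exp (-r) * r ^ n / n.factorial * (((n : ℝ) - r) ^ 2 - n) ^ 2)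
      (2 * r ^ 2) := by
  have h := hasSum_poissonMeasure_mul_descFactorial r
  convert (((((h 4).add ((h 3).mul_left (4 - 4 * r : ℝ))).add
    ((h 2).mul_left (2 - 8 * r + 6 * r ^ 2 : ℝ))).add
    ((h 1).mul_left (4 * r ^ 2 - 4 * r ^ 3 : ℝ))).add
    ((h 0).mul_left ((r : ℝ) ^ 4))).congr_fun fun n ↦ ?_ using 1
  · ring
  · simp only [← descPochhammer_eval_eq_descFactorial ℝ]
    simp [descPochhammer_succ_right]
    ring

variable {r} {f : ℕ → ℝ} {s : ℝ}

lemma integral_poissonMeasure_of_hasSum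
    (h : HasSum (fun n ↦ exp (-r) * r ^ n / n.factorial * f n) s) : ∫ n, f n ∂Po(r) = s := by
  simpa [integral_poissonMeasure] using h.tsum_eq

lemma memLp_two_poissonMeasure_of_hasSum
    (h : HasSum (fun n ↦ exp (-r) * r ^ n / n.factorial * f n ^ 2) s) : MemLp f 2 Po(r) :=
  (memLp_two_iff_integrable_sq .of_discrete).2 <| integrable_poissonMeasure_iff.2 <| by
    simpa using h.summable

lemma variance_poissonMeasure_of_hasSum
    (h₁ : HasSum (fun n ↦ exp (-r) * r ^ n / n.factorial * f n) 0)
    (h₂ : HasSum (fun n ↦ exp (-r) * r ^ n / n.factorial * f n ^ 2) s) : Var[f; Po(r)] = s := by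
  rw [variance_of_integral_eq_zero .of_discrete (integral_poissonMeasure_of_hasSum h₁),
    integral_poissonMeasure_of_hasSum h₂]

variable (r)

lemma integral_sub_poissonMeasure : ∫ n, ((n : ℝ) - r) ∂Po(r) = 0 :=
  integral_poissonMeasure_of_hasSum (hasSum_poissonMeasure_mul_sub r)

lemma memLp_sub_poissonMeasure : MemLp (fun n : ℕ ↦ (n : ℝ) - r) 2 Po(r) :=
  memLp_two_poissonMeasure_of_hasSum (hasSum_poissonMeasure_mul_sub_sq r)

lemma variance_sub_poissonMeasure : Var[fun n : ℕ ↦ (n : ℝ) - r; Po(r)] = r :=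
  variance_poissonMeasure_of_hasSum (hasSum_poissonMeasure_mul_sub r)
    (hasSum_poissonMeasure_mul_sub_sq r)

lemma memLp_charlier_poissonMeasure : MemLp (fun n : ℕ ↦ ((n : ℝ) - r) ^ 2 - n) 2 Po(r) :=
  memLp_two_poissonMeasure_of_hasSum (hasSum_poissonMeasure_mul_charlier_sq r)

lemma variance_charlier_poissonMeasure :
    Var[fun n : ℕ ↦ ((n : ℝ) - r) ^ 2 - n; Po(r)] = 2 * r ^ 2 :=
  variance_poissonMeasure_of_hasSum (hasSum_poissonMeasure_mul_charlier r)
    (hasSum_poissonMeasure_mul_charlier_sq r)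

end PoissonMoments

namespace ProbabilityTheory

variable {Ω α : Type*} {mΩ : MeasurableSpace Ω} {mα : MeasurableSpace α} {μ : Measure Ω}

lemma HasLaw.memLp_comp {ν : Measure α} {X : Ω → α} {E : Type*} [NormedAddCommGroup E]
    {p : ℝ≥0∞} (hX : HasLaw X ν μ) {f : α → E} (hf : MemLp f p ν) :
    MemLp (f ∘ X) p μ := by
  rw [← hX.map_eq] at hf
  exact (memLp_map_measure_iff hf.1 hX.aemeasurable).1 hf

lemma HasLaw.variance_comp {ν : Measure α} {X : Ω → α} (hX : HasLaw X ν μ) {f : α → ℝ}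
    (hf : AEMeasurable f ν) : Var[f ∘ X; μ] = Var[f; ν] := by
  rw [← hX.map_eq] at hf ⊢
  exact (variance_map hf hX.aemeasurable).symm

lemma IndepFun.memLp_two_mul {X Y : Ω → ℝ} (h : X ⟂ᵢ[μ] Y) (hX : MemLp X 2 μ)
    (hY : MemLp Y 2 μ) : MemLp (X * Y) 2 μ := by
  refine (memLp_two_iff_integrable_sq (hX.1.mul hY.1)).2 ?_
  have hsq := h.comp (measurable_id.pow_const 2) (measurable_id.pow_const 2)
  simpa only [Pi.mul_def, Function.comp_def, id, mul_pow] using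
    hsq.integrable_mul hX.integrable_sq hY.integrable_sq

lemma IndepFun.variance_mul_of_integral_eq_zero {X Y : Ω → ℝ} (h : X ⟂ᵢ[μ] Y)
    (hX : MemLp X 2 μ) (hY : MemLp Y 2 μ) (hX₀ : μ[X] = 0) (hY₀ : μ[Y] = 0) :
    Var[X * Y; μ] = Var[X; μ] * Var[Y; μ] := by
  have hXY₀ : μ[X * Y] = 0 := by
    rw [h.integral_mul_eq_mul_integral hX.1 hY.1, hX₀, zero_mul]
  have hsq := h.comp (measurable_id.pow_const 2) (measurable_id.pow_const 2)
  rw [variance_of_integral_eq_zero (hX.1.mul hY.1).aemeasurable hXY₀,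
    variance_of_integral_eq_zero hX.aemeasurable hX₀,
    variance_of_integral_eq_zero hY.aemeasurable hY₀]
  simpa only [Pi.mul_apply, mul_pow, Function.comp_apply, id] using
    hsq.integral_fun_mul_eq_mul_integral (hX.1.pow 2) (hY.1.pow 2)

lemma IndepFun.covariance_mul_right [IsProbabilityMeasure μ] {A Y Z : Ω → ℝ}
    (h : (fun ω ↦ (A ω, Y ω)) ⟂ᵢ[μ] Z)
    (hA : MemLp A 2 μ) (hY : MemLp Y 2 μ) (hZ : MemLp Z 2 μ) :
    cov[A, Y * Z; μ] = cov[A, Y; μ] * μ[Z] := by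
  have hYZ : Y ⟂ᵢ[μ] Z := h.comp measurable_snd measurable_id
  have hAYZ : (A * Y) ⟂ᵢ[μ] Z := h.comp (measurable_fst.mul measurable_snd) measurable_id
  rw [covariance_eq_sub hA (hYZ.memLp_two_mul hY hZ), covariance_eq_sub hA hY, ← mul_assoc,
    hAYZ.integral_mul_eq_mul_integral (hA.1.mul hY.1) hZ.1,
    hYZ.integral_mul_eq_mul_integral hY.1 hZ.1]
  ring

lemma variance_add_add_smul_mul [IsProbabilityMeasure μ] {A₁ Y₁ A₂ Y₂ : Ω → ℝ}
    (h : (fun ω ↦ (A₁ ω, Y₁ ω)) ⟂ᵢ[μ] (fun ω ↦ (A₂ ω, Y₂ ω)))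
    (hA₁ : MemLp A₁ 2 μ) (hY₁ : MemLp Y₁ 2 μ) (hA₂ : MemLp A₂ 2 μ) (hY₂ : MemLp Y₂ 2 μ)
    (hY₁₀ : μ[Y₁] = 0) (hY₂₀ : μ[Y₂] = 0) (c : ℝ) :
    Var[A₁ + A₂ + c • (Y₁ * Y₂); μ]
      = Var[A₁; μ] + Var[A₂; μ] + c ^ 2 * (Var[Y₁; μ] * Var[Y₂; μ]) := by
  have hA : A₁ ⟂ᵢ[μ] A₂ := h.comp measurable_fst measurable_fst
  have hY : Y₁ ⟂ᵢ[μ] Y₂ := h.comp measurable_snd measurable_snd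
  have hYY := hY.memLp_two_mul hY₁ hY₂
  have hcov₁ : cov[A₁, Y₁ * Y₂; μ] = 0 := by
    have h₁ : (fun ω ↦ (A₁ ω, Y₁ ω)) ⟂ᵢ[μ] Y₂ := h.comp measurable_id measurable_snd
    rw [h₁.covariance_mul_right hA₁ hY₁ hY₂, hY₂₀, mul_zero]
  have hcov₂ : cov[A₂, Y₁ * Y₂; μ] = 0 := by
    have h₂ : (fun ω ↦ (A₂ ω, Y₂ ω)) ⟂ᵢ[μ] Y₁ := h.symm.comp measurable_id measurable_snd
    rw [mul_comm, h₂.covariance_mul_right hA₂ hY₂ hY₁, hY₁₀, mul_zero]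
  rw [variance_add (hA₁.add hA₂) (hYY.const_smul c), hA.variance_add hA₁ hA₂,
    covariance_smul_right, covariance_add_left hA₁ hA₂ hYY, hcov₁, hcov₂, variance_smul,
    hY.variance_mul_of_integral_eq_zero hY₁ hY₂ hY₁₀ hY₂₀]
  ring

end ProbabilityTheory

lemma IsPoisson.hasLaw_s10 {Ω : Type*} [MeasurableSpace Ω] {μ : Measure Ω} [IsFiniteMeasure μ]
    {X : Ω → ℕ} {r : ℝ≥0} (hXm : Measurable X) (hX : IsPoisson μ X r) : HasLaw X Po(r) μ where
  map_eq := Measure.ext_of_singleton fun n ↦ by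
    rw [Measure.map_apply hXm (measurableSet_singleton n), poissonMeasure_singleton, ← hX n,
      ENNReal.ofReal_toReal (measure_ne_top μ _)]

theorem stmt_10 {Ω : Type*} [MeasurableSpace Ω] (μ : Measure Ω) [IsProbabilityMeasure μ]
    (X₁ X₂ : Ω → ℕ) (hX₁m : Measurable X₁) (hX₂m : Measurable X₂)
    (n₁ n₂ p₁ p₂ : ℝ) (hn₁ : 0 < n₁) (hn₂ : 0 < n₂)
    (hp₁ : p₁ ∈ Set.Icc (0 : ℝ) 1) (hp₂ : p₂ ∈ Set.Icc (0 : ℝ) 1)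
    (hX₁ : IsPoisson μ X₁ (n₁ * p₁)) (hX₂ : IsPoisson μ X₂ (n₂ * p₂))
    (hind : IndepFun X₁ X₂ μ) :
    variance (fun ω => ((X₁ ω : ℝ) / n₁ - (X₂ ω : ℝ) / n₂) ^ 2
        - (X₁ ω : ℝ) / n₁ ^ 2 - (X₂ ω : ℝ) / n₂ ^ 2
        - 2 * (p₁ - p₂) * ((X₁ ω : ℝ) / n₁ - (X₂ ω : ℝ) / n₂) + (p₁ - p₂) ^ 2) μ
      = 2 * (p₁ / n₁ + p₂ / n₂) ^ 2 := by
  obtain ⟨r₁, hr₁⟩ : ∃ r : ℝ≥0, (r : ℝ) = n₁ * p₁ := ⟨⟨_, mul_nonneg hn₁.le hp₁.1⟩, rfl⟩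
  obtain ⟨r₂, hr₂⟩ : ∃ r : ℝ≥0, (r : ℝ) = n₂ * p₂ := ⟨⟨_, mul_nonneg hn₂.le hp₂.1⟩, rfl⟩
  rw [← hr₁] at hX₁
  rw [← hr₂] at hX₂
  have hlaw₁ := hX₁.hasLaw_s10 hX₁m
  have hlaw₂ := hX₂.hasLaw_s10 hX₂m
  set a₁ : ℕ → ℝ := fun n ↦ (n₁ ^ 2)⁻¹ * (((n : ℝ) - r₁) ^ 2 - n)
  set a₂ : ℕ → ℝ := fun n ↦ (n₂ ^ 2)⁻¹ * (((n : ℝ) - r₂) ^ 2 - n)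
  set y₁ : ℕ → ℝ := fun n ↦ n₁⁻¹ * ((n : ℝ) - r₁)
  set y₂ : ℕ → ℝ := fun n ↦ n₂⁻¹ * ((n : ℝ) - r₂)
  refine (variance_congr (Y := a₁ ∘ X₁ + a₂ ∘ X₂ + (-2 : ℝ) • (y₁ ∘ X₁ * y₂ ∘ X₂))
    (.of_forall fun ω ↦ ?_)).trans ?_
  · simp only [a₁, a₂, y₁, y₂, hr₁, hr₂, Pi.add_apply, Pi.smul_apply, Pi.mul_apply,
      Function.comp_apply, smul_eq_mul]
    field_simp
    ring
  have hmean₁ : μ[y₁ ∘ X₁] = 0 := (hlaw₁.integral_comp .of_discrete).trans <| by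
    rw [integral_const_mul, integral_sub_poissonMeasure, mul_zero]
  have hmean₂ : μ[y₂ ∘ X₂] = 0 := (hlaw₂.integral_comp .of_discrete).trans <| by
    rw [integral_const_mul, integral_sub_poissonMeasure, mul_zero]
  rw [variance_add_add_smul_mul
    (A₁ := a₁ ∘ X₁) (Y₁ := y₁ ∘ X₁) (A₂ := a₂ ∘ X₂) (Y₂ := y₂ ∘ X₂)
    (hind.comp (measurable_of_countable fun n ↦ (a₁ n, y₁ n))
      (measurable_of_countable fun n ↦ (a₂ n, y₂ n)))
    (hlaw₁.memLp_comp ((memLp_charlier_poissonMeasure r₁).const_mul _))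
    (hlaw₁.memLp_comp ((memLp_sub_poissonMeasure r₁).const_mul _))
    (hlaw₂.memLp_comp ((memLp_charlier_poissonMeasure r₂).const_mul _))
    (hlaw₂.memLp_comp ((memLp_sub_poissonMeasure r₂).const_mul _)) hmean₁ hmean₂,
    hlaw₁.variance_comp .of_discrete, hlaw₁.variance_comp .of_discrete,
    hlaw₂.variance_comp .of_discrete, hlaw₂.variance_comp .of_discrete]
  simp only [a₁, a₂, y₁, y₂, variance_const_mul, variance_sub_poissonMeasure,
    variance_charlier_poissonMeasure]
  rw [hr₁, hr₂]
  field_simp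
  ring
end

section
/- For each positive integer m there exists a constant C_m such that for every Poisson random variable X with mean λ ≥ 0, E[(X - λ)^{2m}] ≤ C_m (λ^m + λ). -/
/-!
Write `μ_k` for the `k`-th central moment of `Po(r)`. The Stein–Chen identity
`E[X f(X)] = r E[f(X + 1)]` turns `μ_{k+1} = E[X (X - r)^k] - r μ_k` into the recursion
`μ_{k+1} = r ∑_{j<k} (k choose j) μ_j`, with `μ_0 = 1`, `μ_1 = 0`. By strong induction
`μ_k ≤ k^k max(1, r)^⌊k/2⌋`, and one more application of the recursion extracts a factor `r`:
`μ_{2m} ≤ (2m)^{2m} r max(1, r)^{m-1} ≤ (2m)^{2m} (r^m + r)`.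
-/

open MeasureTheory ProbabilityTheory

open Real Finset
open scoped NNReal Nat

lemma mul_max_one_pow_le {x : ℝ} (hx : 0 ≤ x) (n : ℕ) : x * max 1 x ^ n ≤ x ^ (n + 1) + x := by
  rcases le_total x 1 with h | h
  · rw [max_eq_left h, one_pow, mul_one]
    linarith [pow_nonneg hx (n + 1)]
  · rw [max_eq_right h, ← pow_succ']
    linarith

namespace ProbabilityTheory

lemma succ_mul_poissonMeasure_real_singleton_succ (r : ℝ≥0) (n : ℕ) :
    ((n : ℝ) + 1) * (poissonMeasure r).real {n + 1} = r * (poissonMeasure r).real {n} := by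
  simp only [poissonMeasure_real_singleton, Nat.factorial_succ, Nat.cast_mul, pow_succ]
  field_simp
  push_cast
  ring

lemma summable_poissonMeasure_real_singleton_mul_sub_pow (r : ℝ≥0) (k : ℕ) :
    Summable fun n : ℕ ↦ (poissonMeasure r).real {n} * ((n : ℝ) - r) ^ k := by
  refine .of_norm_bounded ((summable_pow_div_factorial (exp 1 * r)).mul_left (k ! : ℝ))
    fun n ↦ ?_
  have hpow : |(n : ℝ) - r| ^ k ≤ k ! * exp (n + r) := by
    have := pow_div_factorial_le_exp (x := n + r) (by positivity) k
    rw [div_le_iff₀ (by positivity)] at this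
    calc |(n : ℝ) - r| ^ k ≤ ((n : ℝ) + r) ^ k := by
          gcongr
          simpa using abs_sub (n : ℝ) r
      _ ≤ _ := by linarith
  rw [norm_mul, norm_pow, Real.norm_eq_abs, Real.norm_eq_abs, abs_of_nonneg measureReal_nonneg,
    poissonMeasure_real_singleton]
  calc exp (-r) * r ^ n / n ! * |(n : ℝ) - r| ^ k
      ≤ exp (-r) * r ^ n / n ! * (k ! * exp (n + r)) := by gcongr
    _ = k ! * ((exp 1 * r) ^ n / n !) := by
        rw [mul_pow, exp_one_pow, exp_add, exp_neg]
        field_simp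

lemma tsum_natCast_mul_poissonMeasure_real_singleton {r : ℝ≥0} {f : ℕ → ℝ}
    (hf : Summable fun n : ℕ ↦ n * (poissonMeasure r).real {n} * f n) :
    ∑' n : ℕ, n * (poissonMeasure r).real {n} * f n =
      r * ∑' n : ℕ, (poissonMeasure r).real {n} * f (n + 1) := by
  rw [hf.tsum_eq_zero_add, ← tsum_mul_left]
  push_cast
  simp only [zero_mul, zero_add, succ_mul_poissonMeasure_real_singleton_succ, mul_assoc]

noncomputable def poissonCentralMoment (r : ℝ≥0) (k : ℕ) : ℝ :=
  ∫ n, ((n : ℝ) - r) ^ k ∂poissonMeasure r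

lemma poissonCentralMoment_eq_tsum (r : ℝ≥0) (k : ℕ) :
    poissonCentralMoment r k = ∑' n : ℕ, (poissonMeasure r).real {n} * ((n : ℝ) - r) ^ k := by
  simp [poissonCentralMoment, integral_poissonMeasure, poissonMeasure_real_singleton]

@[simp]
lemma poissonCentralMoment_zero (r : ℝ≥0) : poissonCentralMoment r 0 = 1 := by
  simp [poissonCentralMoment]

lemma poissonCentralMoment_succ (r : ℝ≥0) (k : ℕ) :
    poissonCentralMoment r (k + 1) =
      r * ∑ j ∈ range k, (k.choose j : ℝ) * poissonCentralMoment r j := by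
  have hsum := summable_poissonMeasure_real_singleton_mul_sub_pow r
  have hsplit : ∀ n : ℕ, (poissonMeasure r).real {n} * ((n : ℝ) - r) ^ (k + 1) =
      n * (poissonMeasure r).real {n} * ((n : ℝ) - r) ^ k -
        r * ((poissonMeasure r).real {n} * ((n : ℝ) - r) ^ k) := fun n ↦ by ring
  have hsum_mul : Summable fun n : ℕ ↦ n * (poissonMeasure r).real {n} * ((n : ℝ) - r) ^ k := by
    refine ((hsum (k + 1)).add ((hsum k).mul_left (r : ℝ))).congr fun n ↦ ?_
    rw [hsplit]; ring
  have hbinom : ∀ n : ℕ, (poissonMeasure r).real {n} * (((n + 1 : ℕ) : ℝ) - r) ^ k =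
      ∑ j ∈ range (k + 1), (k.choose j : ℝ) * ((poissonMeasure r).real {n} * ((n : ℝ) - r) ^ j) :=
    fun n ↦ by
      rw [Nat.cast_succ, add_sub_right_comm, add_pow, mul_sum]
      exact sum_congr rfl fun j _ ↦ by ring
  simp only [poissonCentralMoment_eq_tsum, hsplit]
  rw [hsum_mul.tsum_sub ((hsum k).mul_left (r : ℝ)),
    tsum_natCast_mul_poissonMeasure_real_singleton hsum_mul, tsum_congr hbinom,
    Summable.tsum_finsetSum fun j _ ↦ (hsum j).mul_left _, sum_range_succ,
    tsum_mul_left, tsum_mul_left, Nat.choose_self]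
  simp_rw [tsum_mul_left]
  ring

lemma poissonCentralMoment_add_two_le {r : ℝ≥0} {k : ℕ}
    (h : ∀ j ≤ k, poissonCentralMoment r j ≤ j ^ j * max 1 (r : ℝ) ^ (j / 2)) :
    poissonCentralMoment r (k + 2) ≤ ((k : ℝ) + 2) ^ (k + 1) * (r * max 1 (r : ℝ) ^ (k / 2)) := by
  set R := max 1 (r : ℝ)
  have hR : 1 ≤ R := le_max_left _ _
  have hterm : ∀ j ∈ range (k + 1), ((k + 1).choose j : ℝ) * poissonCentralMoment r j ≤
      (k + 1).choose j * ((k + 1 : ℝ) ^ j * R ^ (k / 2)) := fun j hj ↦ by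
    have hjk : j ≤ k := Nat.lt_succ_iff.mp (mem_range.mp hj)
    gcongr
    refine (h j hjk).trans ?_
    gcongr
    exact_mod_cast hjk.trans k.le_succ
  have hbinom : ∑ j ∈ range (k + 2), ((k + 1).choose j : ℝ) * ((k + 1 : ℝ) ^ j * R ^ (k / 2)) =
      ((k : ℝ) + 2) ^ (k + 1) * R ^ (k / 2) := by
    rw [show (k : ℝ) + 2 = (k + 1) + 1 by ring, add_pow, sum_mul]
    exact sum_congr rfl fun j _ ↦ by ring
  rw [poissonCentralMoment_succ]
  calc (r : ℝ) * ∑ j ∈ range (k + 1), ((k + 1).choose j : ℝ) * poissonCentralMoment r j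
      ≤ r * ∑ j ∈ range (k + 2), ((k + 1).choose j : ℝ) * ((k + 1 : ℝ) ^ j * R ^ (k / 2)) := by
        gcongr
        refine (sum_le_sum hterm).trans
          (sum_le_sum_of_subset_of_nonneg (range_mono (k + 1).le_succ) fun _ _ _ ↦ by positivity)
    _ = _ := by rw [hbinom]; ring

lemma poissonCentralMoment_le (r : ℝ≥0) (k : ℕ) :
    poissonCentralMoment r k ≤ k ^ k * max 1 (r : ℝ) ^ (k / 2) := by
  induction k using Nat.strong_induction_on with
  | _ k ih =>
    match k with
    | 0 => simp
    | 1 => simp [poissonCentralMoment_succ]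
    | k + 2 =>
      refine (poissonCentralMoment_add_two_le fun j hj ↦ ih j (by omega)).trans ?_
      have hr : (r : ℝ) ≤ max 1 (r : ℝ) := le_max_right _ _
      push_cast
      calc ((k : ℝ) + 2) ^ (k + 1) * (r * max 1 (r : ℝ) ^ (k / 2))
          ≤ ((k : ℝ) + 2) ^ (k + 2) * max 1 (r : ℝ) ^ (k / 2 + 1) := by
            rw [pow_succ (max 1 (r : ℝ)), mul_comm (r : ℝ)]
            gcongr
            · exact one_le_two.trans (le_add_of_nonneg_left k.cast_nonneg)
            · omega
        _ = _ := by rw [Nat.add_div_right k two_pos]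

lemma poissonCentralMoment_two_mul_le (r : ℝ≥0) (m : ℕ) :
    poissonCentralMoment r (2 * m) ≤ ((2 * m : ℕ) : ℝ) ^ (2 * m) * ((r : ℝ) ^ m + r) := by
  rcases m with _ | m
  · simp
  · calc poissonCentralMoment r (2 * m + 2)
        ≤ ((2 * m : ℕ) + 2 : ℝ) ^ (2 * m + 1) * (r * max 1 (r : ℝ) ^ (2 * m / 2)) :=
          poissonCentralMoment_add_two_le fun j _ ↦ poissonCentralMoment_le r j
      _ ≤ ((2 * (m + 1) : ℕ) : ℝ) ^ (2 * (m + 1)) * ((r : ℝ) ^ (m + 1) + r) := by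
          rw [Nat.mul_div_cancel_left m two_pos]
          push_cast
          gcongr
          · rw [show (2 : ℝ) * (m + 1) = 2 * m + 2 by ring]
            exact pow_le_pow_right₀ (by linarith [m.cast_nonneg (α := ℝ)]) (by omega)
          · exact mul_max_one_pow_le r.coe_nonneg m

end ProbabilityTheory

lemma IsPoisson.map_eq {Ω : Type*} [MeasurableSpace Ω] {μ : Measure Ω} [IsFiniteMeasure μ]
    {X : Ω → ℕ} {l : ℝ} (h : IsPoisson μ X l) (hX : Measurable X) (hl : 0 ≤ l) :
    μ.map X = poissonMeasure l.toNNReal :=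
  Measure.ext_of_singleton fun n ↦ by
    rw [Measure.map_apply hX (measurableSet_singleton n), poissonMeasure_singleton,
      Real.coe_toNNReal l hl, ← h n, ENNReal.ofReal_toReal (measure_ne_top _ _)]

theorem stmt_13_general (m : ℕ) :
    ∃ C : ℝ, ∀ (Ω : Type) (_ : MeasurableSpace Ω) (μ : Measure Ω),
      IsProbabilityMeasure μ → ∀ (X : Ω → ℕ), Measurable X → ∀ l : ℝ, 0 ≤ l →
        IsPoisson μ X l →
          ∫ ω, ((X ω : ℝ) - l) ^ (2 * m) ∂μ ≤ C * (l ^ m + l) := by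
  refine ⟨((2 * m : ℕ) : ℝ) ^ (2 * m), fun Ω _ μ _ X hX l hl hP ↦ ?_⟩
  have hmoment : ∫ ω, ((X ω : ℝ) - l) ^ (2 * m) ∂μ = poissonCentralMoment l.toNNReal (2 * m) := by
    rw [poissonCentralMoment, ← hP.map_eq hX hl, integral_map hX.aemeasurable .of_discrete,
      Real.coe_toNNReal l hl]
  simpa only [hmoment, Real.coe_toNNReal l hl] using poissonCentralMoment_two_mul_le l.toNNReal m

theorem stmt_13 (m : ℕ) (hm : 0 < m) :
    ∃ C : ℝ, ∀ (Ω : Type) (_ : MeasurableSpace Ω) (μ : Measure Ω),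
      IsProbabilityMeasure μ → ∀ (X : Ω → ℕ), Measurable X → ∀ l : ℝ, 0 ≤ l →
        IsPoisson μ X l →
          ∫ ω, ((X ω : ℝ) - l) ^ (2 * m) ∂μ ≤ C * (l ^ m + l) :=
  stmt_13_general m
end
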